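/- Let σ > 0, L > 0 and ρ, τ ∈ (0,1). Assume each ∇f_j is Lipschitz continuous with constant L, each B_j satisfies B_j ⪰ σI, and d ≠ 0 is the minimizer of Q(x,·) with optimal value θ = Q(x,d) < 0. Let C_1,…,C_m satisfy C_j ≥ F_j(x) for all j. Suppose α ∈ (0,1] satisfies F_j(x + α d) ≤ C_j + τ α θ for all j, while the condition fails at α/ρ ∈ (0,1], i.e., there exists j with F_j(x + (α/ρ) d) > C_j + τ (α/ρ) θ. Then α ≥ 2ρ(1−τ)|θ|/(L‖d‖²), and consequently F_j(x + α d) ≤ C_j − (σ τ ρ (1−τ)/L)|θ| for every j. -/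

import Mathlib

/-!
For `t ∈ [0,1]` the descent lemma for `f_j` and convexity of `g_j` along the segment give
`F_j(x + t d) ≤ F_j(x) + t (Q_j(x,d) - ⟨d, B_j d⟩/2) + (L/2) t² ‖d‖²`. At the rejected step `α/ρ`
this forces `(1 - τ)|θ| ≤ (L/2)(α/ρ)‖d‖²`, the lower bound on `α`. The same convexity estimate
compares `Q(x,d)` with `Q(x,t d)`: minimality of `d` yields `θ ≤ -t σ‖d‖²/2` for `t < 1`, so
`|θ| ≥ σ‖d‖²/2` in the limit, and this turns the accepted decrease `τ α |θ|` into the stated one.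
-/

open Filter Topology
open scoped RealInnerProductSpace BigOperators

noncomputable section

namespace NPQN

variable {n m : ℕ}

/-- The quadratic form `⟨d, B d⟩` of a matrix `B` acting on Euclidean space. -/
def mquad (B : Matrix (Fin n) (Fin n) ℝ) (d : EuclideanSpace ℝ (Fin n)) : ℝ :=
  ⟪d, Matrix.toEuclideanLin B d⟫

/-- `B ⪰ σ I`, i.e. `⟨d, B d⟩ ≥ σ‖d‖²` for all `d`. -/
def MatGE (B : Matrix (Fin n) (Fin n) ℝ) (σ : ℝ) : Prop :=
  ∀ d : EuclideanSpace ℝ (Fin n), σ * ‖d‖ ^ 2 ≤ mquad B d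

/-- `Q_j(x,d) = ⟨∇f_j(x), d⟩ + (1/2)⟨d, B_j d⟩ + g_j(x+d) − g_j(x)`. -/
def Qj (f g : Fin m → EuclideanSpace ℝ (Fin n) → ℝ)
    (B : Fin m → Matrix (Fin n) (Fin n) ℝ) (x d : EuclideanSpace ℝ (Fin n)) (j : Fin m) : ℝ :=
  ⟪gradient (f j) x, d⟫ + (1 / 2) * mquad (B j) d + g j (x + d) - g j x

/-- `Q(x,d) = max_j Q_j(x,d)`. -/
def Qmax (f g : Fin m → EuclideanSpace ℝ (Fin n) → ℝ)
    (B : Fin m → Matrix (Fin n) (Fin n) ℝ) (x d : EuclideanSpace ℝ (Fin n)) : ℝ :=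
  ⨆ j, Qj f g B x d j

/-- `θ(x) = inf_d Q(x,d)`. -/
def theta (f g : Fin m → EuclideanSpace ℝ (Fin n) → ℝ)
    (B : Fin m → Matrix (Fin n) (Fin n) ℝ) (x : EuclideanSpace ℝ (Fin n)) : ℝ :=
  ⨅ d, Qmax f g B x d

/-- One-sided directional derivative. -/
def HasDirDeriv (F : EuclideanSpace ℝ (Fin n) → ℝ) (x d : EuclideanSpace ℝ (Fin n)) (c : ℝ) : Prop :=
  Tendsto (fun t : ℝ => (F (x + t • d) - F x) / t) (𝓝[>] (0 : ℝ)) (𝓝 c)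

/-- `x` is a critical point of `F = (F_1,…,F_m)`. -/
def IsCriticalPt (F : Fin m → EuclideanSpace ℝ (Fin n) → ℝ) (x : EuclideanSpace ℝ (Fin n)) : Prop :=
  ¬ ∃ d : EuclideanSpace ℝ (Fin n), ∀ j, ∃ c : ℝ, HasDirDeriv (F j) x d c ∧ c < 0

/-- `ξ` is a subgradient of `g` at `y`. -/
def IsSubgradAt (g : EuclideanSpace ℝ (Fin n) → ℝ) (y ξ : EuclideanSpace ℝ (Fin n)) : Prop :=
  ∀ z, g y + ⟪ξ, z - y⟫ ≤ g z

/-- Hessian of `f` as the derivative of the gradient. -/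
def hess (f : EuclideanSpace ℝ (Fin n) → ℝ) (z : EuclideanSpace ℝ (Fin n)) :
    EuclideanSpace ℝ (Fin n) →L[ℝ] EuclideanSpace ℝ (Fin n) :=
  fderiv ℝ (fun y => gradient f y) z

end NPQN

section Descent

variable {E : Type*} [NormedAddCommGroup E] [InnerProductSpace ℝ E] [CompleteSpace E]
  {f : E → ℝ} {x v : E}

theorem hasDerivAt_comp_add_smul_of_differentiableAt {t : ℝ}
    (hf : DifferentiableAt ℝ f (x + t • v)) :
    HasDerivAt (fun s : ℝ => f (x + s • v)) ⟪gradient f (x + t • v), v⟫ t := by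
  have hline : HasDerivAt (fun s : ℝ => x + s • v) v t := by
    simpa using ((hasDerivAt_id t).smul_const v).const_add x
  have h := hf.hasGradientAt.hasFDerivAt.comp_hasDerivAt t hline
  simp only [InnerProductSpace.toDual_apply_apply] at h
  exact h

theorem inner_gradient_add_smul_sub_le {K : NNReal} (hK : LipschitzWith K (gradient f))
    {t : ℝ} (ht : 0 ≤ t) :
    ⟪gradient f (x + t • v) - gradient f x, v⟫ ≤ K * t * ‖v‖ ^ 2 :=
  calc ⟪gradient f (x + t • v) - gradient f x, v⟫
      ≤ ‖gradient f (x + t • v) - gradient f x‖ * ‖v‖ := real_inner_le_norm _ _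
    _ ≤ K * ‖t • v‖ * ‖v‖ := by
        gcongr
        simpa [dist_eq_norm] using hK.dist_le_mul (x + t • v) x
    _ = K * t * ‖v‖ ^ 2 := by rw [norm_smul, Real.norm_of_nonneg ht]; ring

theorem image_add_le_of_lipschitzWith_gradient (hf : Differentiable ℝ f) {K : NNReal}
    (hK : LipschitzWith K (gradient f)) (x v : E) :
    f (x + v) ≤ f x + ⟪gradient f x, v⟫ + K / 2 * ‖v‖ ^ 2 := by
  have hderiv (t : ℝ) := hasDerivAt_comp_add_smul_of_differentiableAt (hf (x + t • v))
  have hmodel (t : ℝ) :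
      HasDerivAt (fun s : ℝ => f x + s * ⟪gradient f x, v⟫ + K / 2 * s ^ 2 * ‖v‖ ^ 2)
        (⟪gradient f x, v⟫ + K * t * ‖v‖ ^ 2) t :=
    ((((hasDerivAt_id t).mul_const _).const_add _).add
      (((hasDerivAt_pow 2 t).const_mul _).mul_const _)).congr_deriv (by push_cast; ring)
  have hslope (t : ℝ) (ht : 0 ≤ t) :
      ⟪gradient f (x + t • v), v⟫ ≤ ⟪gradient f x, v⟫ + K * t * ‖v‖ ^ 2 := by
    have := inner_gradient_add_smul_sub_le (x := x) (v := v) hK ht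
    rw [inner_sub_left] at this
    linarith
  have := image_le_of_deriv_right_le_deriv_boundary (a := 0) (b := 1)
    (fun t _ => (hderiv t).continuousAt.continuousWithinAt) (fun t _ => (hderiv t).hasDerivWithinAt)
    (by simp) (fun t _ => (hmodel t).continuousAt.continuousWithinAt)
    (fun t _ => (hmodel t).hasDerivWithinAt) (fun t ht => hslope t ht.1)
    (Set.right_mem_Icc.2 zero_le_one)
  simpa using this

end Descent

theorem ConvexOn.apply_add_smul_le {E : Type*} [AddCommGroup E] [Module ℝ E] {g : E → ℝ}
    (hg : ConvexOn ℝ Set.univ g) (x d : E) {t : ℝ} (ht0 : 0 ≤ t) (ht1 : t ≤ 1) :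
    g (x + t • d) ≤ g x + t * (g (x + d) - g x) := by
  have h := hg.2 (Set.mem_univ x) (Set.mem_univ (x + d)) (sub_nonneg.2 ht1) ht0 (by ring)
  rw [show (1 - t) • x + t • (x + d) = x + t • d by module, smul_eq_mul, smul_eq_mul] at h
  linarith

namespace NPQN

variable {n m : ℕ} {f g : Fin m → EuclideanSpace ℝ (Fin n) → ℝ}
  {B : Fin m → Matrix (Fin n) (Fin n) ℝ} {x d : EuclideanSpace ℝ (Fin n)} {σ t : ℝ}

theorem mquad_smul (B : Matrix (Fin n) (Fin n) ℝ) (t : ℝ) (d : EuclideanSpace ℝ (Fin n)) :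
    mquad B (t • d) = t ^ 2 * mquad B d := by
  rw [mquad, map_smul, real_inner_smul_left, real_inner_smul_right, mquad]
  ring

theorem Qj_le_Qmax (j : Fin m) : Qj f g B x d j ≤ Qmax f g B x d :=
  le_ciSup (Set.finite_range _).bddAbove j

theorem Qj_smul_le {j : Fin m} (hg : ConvexOn ℝ Set.univ (g j)) (ht0 : 0 ≤ t) (ht1 : t ≤ 1) :
    Qj f g B x (t • d) j ≤ t * Qj f g B x d j + (t ^ 2 - t) / 2 * mquad (B j) d := by
  have := hg.apply_add_smul_le x d ht0 ht1
  rw [Qj, Qj, real_inner_smul_right, mquad_smul]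
  linarith

theorem add_apply_add_smul_le {j : Fin m} {K : NNReal} (hf : Differentiable ℝ (f j))
    (hK : LipschitzWith K (gradient (f j))) (hg : ConvexOn ℝ Set.univ (g j))
    (ht0 : 0 ≤ t) (ht1 : t ≤ 1) :
    f j (x + t • d) + g j (x + t • d) ≤
      f j x + g j x + t * (Qj f g B x d j - mquad (B j) d / 2) + K / 2 * t ^ 2 * ‖d‖ ^ 2 := by
  have hfd := image_add_le_of_lipschitzWith_gradient hf hK x (t • d)
  have hgd := hg.apply_add_smul_le x d ht0 ht1
  rw [real_inner_smul_right, norm_smul, Real.norm_of_nonneg ht0] at hfd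
  rw [Qj]
  linarith

theorem one_sub_mul_neg_le_of_armijo_fails {j : Fin m} {K : NNReal} {θ τ C : ℝ}
    (hf : Differentiable ℝ (f j)) (hK : LipschitzWith K (gradient (f j)))
    (hg : ConvexOn ℝ Set.univ (g j)) (hQ : Qj f g B x d j ≤ θ) (hM : 0 ≤ mquad (B j) d)
    (hC : f j x + g j x ≤ C) (ht0 : 0 < t) (ht1 : t ≤ 1)
    (hfail : C + τ * t * θ < f j (x + t • d) + g j (x + t • d)) :
    (1 - τ) * -θ ≤ K / 2 * t * ‖d‖ ^ 2 := by
  have hupper := add_apply_add_smul_le (B := B) (x := x) (d := d) hf hK hg ht0.le ht1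
  refine le_of_mul_le_mul_right ?_ ht0
  nlinarith [mul_le_mul_of_nonneg_left hQ ht0.le, mul_nonneg ht0.le hM]

theorem Qmax_smul_le [Nonempty (Fin m)] (hg : ∀ j, ConvexOn ℝ Set.univ (g j))
    (hB : ∀ j, MatGE (B j) σ) (ht0 : 0 ≤ t) (ht1 : t ≤ 1) :
    Qmax f g B x (t • d) ≤ t * Qmax f g B x d - t * (1 - t) / 2 * (σ * ‖d‖ ^ 2) :=
  ciSup_le fun j => (Qj_smul_le (hg j) ht0 ht1).trans <| by
    have hQ : Qj f g B x d j ≤ Qmax f g B x d := Qj_le_Qmax j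
    nlinarith [mul_le_mul_of_nonneg_left hQ ht0,
      mul_le_mul_of_nonneg_left (hB j d) (by nlinarith : 0 ≤ t * (1 - t) / 2)]

theorem half_mul_sq_norm_le_neg_Qmax [Nonempty (Fin m)] (hg : ∀ j, ConvexOn ℝ Set.univ (g j))
    (hB : ∀ j, MatGE (B j) σ) (hmin : ∀ e, Qmax f g B x d ≤ Qmax f g B x e) :
    σ * ‖d‖ ^ 2 / 2 ≤ -Qmax f g B x d := by
  have hshort : ∀ t ∈ Set.Ioo (0 : ℝ) 1, Qmax f g B x d ≤ -(t * (σ * ‖d‖ ^ 2 / 2)) := by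
    rintro t ⟨ht0, ht1⟩
    have h := (hmin (t • d)).trans (Qmax_smul_le hg hB ht0.le ht1.le)
    refine le_of_mul_le_mul_left ?_ (sub_pos.2 ht1)
    linarith
  have hlim : Tendsto (fun t : ℝ => -(t * (σ * ‖d‖ ^ 2 / 2))) (𝓝[<] 1)
      (𝓝 (-(1 * (σ * ‖d‖ ^ 2 / 2)))) :=
    (Continuous.tendsto (by fun_prop) 1).mono_left nhdsWithin_le_nhds
  have := ge_of_tendsto hlim (mem_of_superset (Ioo_mem_nhdsLT zero_lt_one) hshort)
  linarith

theorem stepsize_lower_bound_and_decrease_general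
    (n m : ℕ)
    (f g : Fin m → EuclideanSpace ℝ (Fin n) → ℝ)
    (hfdiff : ∀ j, ContDiff ℝ 1 (f j))
    (hgconv : ∀ j, ConvexOn ℝ Set.univ (g j))
    (σ L ρ τ : ℝ) (hσ : 0 < σ) (hL : 0 < L)
    (hρ : ρ ∈ Set.Ioo (0 : ℝ) 1) (hτ : τ ∈ Set.Ioo (0 : ℝ) 1)
    (hLip : ∀ j, LipschitzWith L.toNNReal (fun y => gradient (f j) y))
    (B : Fin m → Matrix (Fin n) (Fin n) ℝ)
    (hB : ∀ j, MatGE (B j) σ)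
    (x d : EuclideanSpace ℝ (Fin n))
    (hdmin : ∀ e, Qmax f g B x d ≤ Qmax f g B x e)
    (θ : ℝ) (hθ : θ = Qmax f g B x d) (hθneg : θ < 0)
    (C : Fin m → ℝ) (hC : ∀ j, f j x + g j x ≤ C j)
    (α : ℝ)
    (hok : ∀ j, f j (x + α • d) + g j (x + α • d) ≤ C j + τ * α * θ)
    (hαρ : α / ρ ∈ Set.Ioc (0 : ℝ) 1)
    (hfail : ∃ j, C j + τ * (α / ρ) * θ < f j (x + (α / ρ) • d) + g j (x + (α / ρ) • d)) :
    2 * ρ * (1 - τ) * |θ| / (L * ‖d‖ ^ 2) ≤ α ∧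
    ∀ j, f j (x + α • d) + g j (x + α • d) ≤ C j - σ * τ * ρ * (1 - τ) / L * |θ| := by
  obtain ⟨hρ0, -⟩ := hρ
  obtain ⟨hτ0, -⟩ := hτ
  obtain ⟨hβ0, hβ1⟩ := hαρ
  obtain ⟨i, hi⟩ := hfail
  have : Nonempty (Fin m) := ⟨i⟩
  have hα0 : 0 < α := (div_pos_iff_of_pos_right hρ0).1 hβ0
  rw [abs_of_neg hθneg]
  have hrejected := one_sub_mul_neg_le_of_armijo_fails (hfdiff i).differentiable_one (hLip i)
    (hgconv i) (hθ ▸ Qj_le_Qmax i) ((by positivity : 0 ≤ σ * ‖d‖ ^ 2).trans (hB i d)) (hC i)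
    hβ0 hβ1 hi
  rw [Real.coe_toNNReal L hL.le] at hrejected
  have hstep : 2 * ρ * (1 - τ) * -θ ≤ α * (L * ‖d‖ ^ 2) :=
    calc 2 * ρ * (1 - τ) * -θ = 2 * ρ * ((1 - τ) * -θ) := by ring
      _ ≤ 2 * ρ * (L / 2 * (α / ρ) * ‖d‖ ^ 2) := by gcongr
      _ = α * (L * ‖d‖ ^ 2) := by field_simp
  have hθσ : σ * ‖d‖ ^ 2 / 2 ≤ -θ := hθ ▸ half_mul_sq_norm_le_neg_Qmax hgconv hB hdmin
  have hσα : σ * ρ * (1 - τ) * -θ ≤ L * α * -θ := by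
    nlinarith [mul_le_mul_of_nonneg_left hstep hσ.le,
      mul_le_mul_of_nonneg_left hθσ (by positivity : 0 ≤ L * α)]
  have hdecr : σ * τ * ρ * (1 - τ) / L * -θ ≤ τ * α * -θ := by
    rw [div_mul_eq_mul_div, div_le_iff₀ hL]
    nlinarith [mul_le_mul_of_nonneg_left hσα hτ0.le]
  refine ⟨div_le_of_le_mul₀ (by positivity) hα0.le hstep, fun j => ?_⟩
  linarith [hok j]

/-- Step-length lower bound and sufficient decrease: if the nonmonotone
condition holds at `α ∈ (0,1]` but fails at `α/ρ ∈ (0,1]`, then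
`α ≥ 2ρ(1−τ)|θ|/(L‖d‖²)`, and consequently
`F_j(x + α d) ≤ C_j − (στρ(1−τ)/L)|θ|` for every `j`. -/
theorem stepsize_lower_bound_and_decrease
    (n m : ℕ) (hn : 1 ≤ n) (hm : 1 ≤ m)
    (f g : Fin m → EuclideanSpace ℝ (Fin n) → ℝ)
    (hfconv : ∀ j, ConvexOn ℝ Set.univ (f j))
    (hfdiff : ∀ j, ContDiff ℝ 1 (f j))
    (hgconv : ∀ j, ConvexOn ℝ Set.univ (g j))
    (hgcont : ∀ j, Continuous (g j))
    (σ L ρ τ : ℝ) (hσ : 0 < σ) (hL : 0 < L)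
    (hρ : ρ ∈ Set.Ioo (0 : ℝ) 1) (hτ : τ ∈ Set.Ioo (0 : ℝ) 1)
    (hLip : ∀ j, LipschitzWith L.toNNReal (fun y => gradient (f j) y))
    (B : Fin m → Matrix (Fin n) (Fin n) ℝ)
    (hBsymm : ∀ j, (B j).IsSymm)
    (hB : ∀ j, MatGE (B j) σ)
    (x d : EuclideanSpace ℝ (Fin n)) (hdne : d ≠ 0)
    (hdmin : ∀ e, Qmax f g B x d ≤ Qmax f g B x e)
    (θ : ℝ) (hθ : θ = Qmax f g B x d) (hθneg : θ < 0)
    (C : Fin m → ℝ) (hC : ∀ j, f j x + g j x ≤ C j)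
    (α : ℝ) (hα : α ∈ Set.Ioc (0 : ℝ) 1)
    (hok : ∀ j, f j (x + α • d) + g j (x + α • d) ≤ C j + τ * α * θ)
    (hαρ : α / ρ ∈ Set.Ioc (0 : ℝ) 1)
    (hfail : ∃ j, C j + τ * (α / ρ) * θ < f j (x + (α / ρ) • d) + g j (x + (α / ρ) • d)) :
    2 * ρ * (1 - τ) * |θ| / (L * ‖d‖ ^ 2) ≤ α ∧
    ∀ j, f j (x + α • d) + g j (x + α • d) ≤ C j - σ * τ * ρ * (1 - τ) / L * |θ| :=
  stepsize_lower_bound_and_decrease_general n m f g hfdiff hgconv σ L ρ τ hσ hL hρ hτ hLip B hB x d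
    hdmin θ hθ hθneg C hC α hok hαρ hfail

end NPQN
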